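/- Both the Shrikhande graph and the 4×4 rook's graph are strongly regular with parameters (16, 6, 2, 2): each is a 6-regular simple graph on 16 vertices in which every pair of adjacent vertices has exactly 2 common neighbors and every pair of distinct non-adjacent vertices has exactly 2 common neighbors. Equivalently, both are distance-regular graphs of diameter 2 with the same intersection array (6, 3; 1, 2). -/
import Mathlib

/-!
STATEMENT 17: The Shrikhande graph and the 4×4 rook's graph are both strongly regular
with parameters (16, 6, 2, 2); equivalently, both are distance-regular of diameter 2
with the same intersection array (6, 3; 1, 2).
-/

namespace KHopStmt17

/-- The connection set of the Shrikhande graph. -/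
def shrikhandeSet : Finset (ZMod 4 × ZMod 4) :=
  {(1, 0), (3, 0), (0, 1), (0, 3), (1, 1), (3, 3)}

/-- The Shrikhande graph: the Cayley graph on `(ℤ/4ℤ) × (ℤ/4ℤ)` with connection set
`{(1,0), (3,0), (0,1), (0,3), (1,1), (3,3)}`. -/
def Shrikhande : SimpleGraph (ZMod 4 × ZMod 4) :=
  SimpleGraph.fromRel fun a b => a - b ∈ shrikhandeSet

/-- The 4×4 rook's graph on `(ℤ/4ℤ) × (ℤ/4ℤ)`: two distinct vertices are adjacent iff
they agree in the first coordinate or agree in the second coordinate. -/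
def RookGraph : SimpleGraph (ZMod 4 × ZMod 4) :=
  SimpleGraph.fromRel fun a b => a.1 = b.1 ∨ a.2 = b.2

instance : DecidableRel Shrikhande.Adj := fun a b =>
  decidable_of_iff _
    (SimpleGraph.fromRel_adj
      (fun a b : ZMod 4 × ZMod 4 => a - b ∈ shrikhandeSet) a b).symm

instance : DecidableRel RookGraph.Adj := fun a b =>
  decidable_of_iff _
    (SimpleGraph.fromRel_adj
      (fun a b : ZMod 4 × ZMod 4 => a.1 = b.1 ∨ a.2 = b.2) a b).symm

/-- `G` is a distance-regular graph of diameter 2 with intersection array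
`(b₀, b₁; c₁, c₂)`: it is connected and `b₀`-regular of diameter 2, and for every pair
of vertices `x, y` at distance `j ∈ {1, 2}`, `y` has exactly `b_j` neighbors at
distance `j+1` from `x` and exactly `c_j` neighbors at distance `j−1` from `x`. -/
def IsDRGWithArray {V : Type*} [Fintype V] (G : SimpleGraph V) [DecidableRel G.Adj]
    (b0 b1 c1 c2 : ℕ) : Prop :=
  G.Connected ∧ G.diam = 2 ∧ G.IsRegularOfDegree b0 ∧
  (∀ x y : V, G.dist x y = 1 →
    ((G.neighborFinset y).filter fun w => G.dist x w = 2).card = b1 ∧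
    ((G.neighborFinset y).filter fun w => G.dist x w = 0).card = c1) ∧
  (∀ x y : V, G.dist x y = 2 →
    ((G.neighborFinset y).filter fun w => G.dist x w = 1).card = c2)

section Aux

variable {V : Type*} [Fintype V] [DecidableEq V] {G : SimpleGraph V} [DecidableRel G.Adj]

/-- If any two distinct non-adjacent vertices have a common neighbor, then the
distance function has an explicit form. -/
lemma dist_formula
    (hcn : ∀ x y : V, x ≠ y → ¬G.Adj x y → ∃ z, G.Adj x z ∧ G.Adj z y)
    (x y : V) : G.dist x y = if x = y then 0 else if G.Adj x y then 1 else 2 := by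
  split_ifs with h1 h2
  · subst h1; exact SimpleGraph.dist_self
  · exact SimpleGraph.dist_eq_one_iff_adj.mpr h2
  · obtain ⟨z, hz1, hz2⟩ := hcn x y h1 h2
    have hle : G.dist x y ≤ 2 := by
      have := SimpleGraph.dist_le
        (SimpleGraph.Walk.cons hz1 (SimpleGraph.Walk.cons hz2 SimpleGraph.Walk.nil))
      simpa using this
    have hne0 : G.dist x y ≠ 0 := by
      rw [Ne, SimpleGraph.dist_eq_zero_iff_eq_or_not_reachable]
      push_neg
      exact ⟨h1, ⟨SimpleGraph.Walk.cons hz1 (SimpleGraph.Walk.cons hz2 SimpleGraph.Walk.nil)⟩⟩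
    have hne1 : G.dist x y ≠ 1 := fun h => h2 (SimpleGraph.dist_eq_one_iff_adj.mp h)
    omega

lemma connected_of_cn [Nonempty V]
    (hcn : ∀ x y : V, x ≠ y → ¬G.Adj x y → ∃ z, G.Adj x z ∧ G.Adj z y) :
    G.Connected := by
  have hpre : G.Preconnected := by
   intro x y
   by_cases h1 : x = y
   · subst h1; exact SimpleGraph.Reachable.refl x
   by_cases h2 : G.Adj x y
   · exact h2.reachable
   · obtain ⟨z, hz1, hz2⟩ := hcn x y h1 h2
     exact ⟨SimpleGraph.Walk.cons hz1 (SimpleGraph.Walk.cons hz2 SimpleGraph.Walk.nil)⟩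
  exact ⟨hpre⟩

lemma diam_eq_two_of_cn
    (hcn : ∀ x y : V, x ≠ y → ¬G.Adj x y → ∃ z, G.Adj x z ∧ G.Adj z y)
    (x0 y0 : V) (hne : x0 ≠ y0) (hna : ¬G.Adj x0 y0) : G.diam = 2 := by
  have hedist : ∀ u v : V, G.edist u v ≤ 2 := by
    intro u v
    by_cases h1 : u = v
    · subst h1; simp
    by_cases h2 : G.Adj u v
    · have h := SimpleGraph.edist_le (SimpleGraph.Walk.cons h2 SimpleGraph.Walk.nil)
      simp at h
      exact h.trans (by norm_num)
    · obtain ⟨z, hz1, hz2⟩ := hcn u v h1 h2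
      have := SimpleGraph.edist_le
        (SimpleGraph.Walk.cons hz1 (SimpleGraph.Walk.cons hz2 SimpleGraph.Walk.nil))
      simpa using this
  have hle : G.ediam ≤ 2 := SimpleGraph.ediam_le_of_edist_le hedist
  have hdist : G.dist x0 y0 = 2 := by
    rw [dist_formula hcn]; simp [hne, hna]
  have hetop : G.edist x0 y0 ≠ ⊤ :=
    ne_top_of_le_ne_top (by simp) (hedist x0 y0)
  have hcoe : G.edist x0 y0 = 2 := by
    have h1 : (G.edist x0 y0).toNat = 2 := hdist
    rw [← ENat.coe_toNat hetop, h1]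
    rfl
  have hge : (2 : ℕ∞) ≤ G.ediam := hcoe ▸ SimpleGraph.edist_le_ediam
  have hediam : G.ediam = 2 := le_antisymm hle hge
  rw [SimpleGraph.diam, hediam]
  rfl

lemma dist_eq_two_iff
    (hcn : ∀ x y : V, x ≠ y → ¬G.Adj x y → ∃ z, G.Adj x z ∧ G.Adj z y)
    (x w : V) : G.dist x w = 2 ↔ ¬x = w ∧ ¬G.Adj x w := by
  rw [dist_formula hcn]
  split_ifs <;> simp_all

lemma dist_eq_zero_iff'
    (hcn : ∀ x y : V, x ≠ y → ¬G.Adj x y → ∃ z, G.Adj x z ∧ G.Adj z y)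
    (x w : V) : G.dist x w = 0 ↔ x = w := by
  rw [dist_formula hcn]
  split_ifs <;> simp_all

lemma card_commonNeighbors_eq [DecidableEq V] (v w : V) :
    Fintype.card (G.commonNeighbors v w) =
      (Finset.univ.filter fun z => G.Adj v z ∧ G.Adj w z).card := by
  rw [← Set.toFinset_card]
  congr 1
  ext z
  simp [SimpleGraph.mem_commonNeighbors]

end Aux

/-- Common-neighbor existence for the Shrikhande graph. -/
lemma shrikhande_cn : ∀ x y : ZMod 4 × ZMod 4, x ≠ y → ¬Shrikhande.Adj x y →
    ∃ z, Shrikhande.Adj x z ∧ Shrikhande.Adj z y := by decide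

/-- Common-neighbor existence for the rook's graph. -/
lemma rook_cn : ∀ x y : ZMod 4 × ZMod 4, x ≠ y → ¬RookGraph.Adj x y →
    ∃ z, RookGraph.Adj x z ∧ RookGraph.Adj z y := by decide

/-- Both the Shrikhande graph and the 4×4 rook's graph are strongly
regular with parameters (16, 6, 2, 2), and both are distance-regular of diameter 2 with
intersection array (6, 3; 1, 2). -/
theorem shrikhande_rook_same_srg_parameters :
    Shrikhande.IsSRGWith 16 6 2 2 ∧ RookGraph.IsSRGWith 16 6 2 2 ∧
    IsDRGWithArray Shrikhande 6 3 1 2 ∧ IsDRGWithArray RookGraph 6 3 1 2 := by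
  have hAs : ∀ x y : ZMod 4 × ZMod 4, Shrikhande.Adj x y →
      ((Shrikhande.neighborFinset y).filter fun w => ¬x = w ∧ ¬Shrikhande.Adj x w).card = 3 := by
    decide
  have hBs : ∀ x y : ZMod 4 × ZMod 4, Shrikhande.Adj x y →
      ((Shrikhande.neighborFinset y).filter fun w => x = w).card = 1 := by decide
  have hCs : ∀ x y : ZMod 4 × ZMod 4, ¬x = y → ¬Shrikhande.Adj x y →
      ((Shrikhande.neighborFinset y).filter fun w => Shrikhande.Adj x w).card = 2 := by decide
  have hAr : ∀ x y : ZMod 4 × ZMod 4, RookGraph.Adj x y →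
      ((RookGraph.neighborFinset y).filter fun w => ¬x = w ∧ ¬RookGraph.Adj x w).card = 3 := by
    decide
  have hBr : ∀ x y : ZMod 4 × ZMod 4, RookGraph.Adj x y →
      ((RookGraph.neighborFinset y).filter fun w => x = w).card = 1 := by decide
  have hCr : ∀ x y : ZMod 4 × ZMod 4, ¬x = y → ¬RookGraph.Adj x y →
      ((RookGraph.neighborFinset y).filter fun w => RookGraph.Adj x w).card = 2 := by decide
  have hdegs : ∀ v : ZMod 4 × ZMod 4, Shrikhande.degree v = 6 := by decide
  have hdegr : ∀ v : ZMod 4 × ZMod 4, RookGraph.degree v = 6 := by decide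
  have hadj2s : ∀ v w : ZMod 4 × ZMod 4, Shrikhande.Adj v w →
      (Finset.univ.filter fun z => Shrikhande.Adj v z ∧ Shrikhande.Adj w z).card = 2 := by
    decide
  have hnadj2s : ∀ v w : ZMod 4 × ZMod 4, v ≠ w → ¬Shrikhande.Adj v w →
      (Finset.univ.filter fun z => Shrikhande.Adj v z ∧ Shrikhande.Adj w z).card = 2 := by
    decide
  have hadj2r : ∀ v w : ZMod 4 × ZMod 4, RookGraph.Adj v w →
      (Finset.univ.filter fun z => RookGraph.Adj v z ∧ RookGraph.Adj w z).card = 2 := by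
    decide
  have hnadj2r : ∀ v w : ZMod 4 × ZMod 4, v ≠ w → ¬RookGraph.Adj v w →
      (Finset.univ.filter fun z => RookGraph.Adj v z ∧ RookGraph.Adj w z).card = 2 := by
    decide
  refine ⟨⟨by decide, hdegs,
      fun v w h => by rw [card_commonNeighbors_eq]; exact hadj2s v w h,
      fun v w hne hna => by rw [card_commonNeighbors_eq]; exact hnadj2s v w hne hna⟩,
    ⟨by decide, hdegr,
      fun v w h => by rw [card_commonNeighbors_eq]; exact hadj2r v w h,
      fun v w hne hna => by rw [card_commonNeighbors_eq]; exact hnadj2r v w hne hna⟩, ?_, ?_⟩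
  · refine ⟨connected_of_cn shrikhande_cn,
      diam_eq_two_of_cn shrikhande_cn ((0:ZMod 4),(0:ZMod 4)) ((1:ZMod 4),(2:ZMod 4))
        (by decide) (by decide), hdegs, ?_, ?_⟩
    · intro x y h
      have hadj : Shrikhande.Adj x y := SimpleGraph.dist_eq_one_iff_adj.mp h
      constructor
      · rw [Finset.filter_congr fun w _ => dist_eq_two_iff shrikhande_cn x w]
        exact hAs x y hadj
      · rw [Finset.filter_congr fun w _ => dist_eq_zero_iff' shrikhande_cn x w]
        exact hBs x y hadj
    · intro x y h
      obtain ⟨hne, hna⟩ := (dist_eq_two_iff shrikhande_cn x y).mp h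
      rw [Finset.filter_congr fun w _ => (SimpleGraph.dist_eq_one_iff_adj :
        Shrikhande.dist x w = 1 ↔ _)]
      exact hCs x y hne hna
  · refine ⟨connected_of_cn rook_cn,
      diam_eq_two_of_cn rook_cn ((0:ZMod 4),(0:ZMod 4)) ((1:ZMod 4),(1:ZMod 4))
        (by decide) (by decide), hdegr, ?_, ?_⟩
    · intro x y h
      have hadj : RookGraph.Adj x y := SimpleGraph.dist_eq_one_iff_adj.mp h
      constructor
      · rw [Finset.filter_congr fun w _ => dist_eq_two_iff rook_cn x w]
        exact hAr x y hadj
      · rw [Finset.filter_congr fun w _ => dist_eq_zero_iff' rook_cn x w]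
        exact hBr x y hadj
    · intro x y h
      obtain ⟨hne, hna⟩ := (dist_eq_two_iff rook_cn x y).mp h
      rw [Finset.filter_congr fun w _ => (SimpleGraph.dist_eq_one_iff_adj :
        RookGraph.dist x w = 1 ↔ _)]
      exact hCr x y hne hna

end KHopStmt17
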